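/- arXiv:1012.1906 — 3 statements merged into one kernel-verified Lean document; each statement's English description precedes it below -/
import Mathlib

section
/- The two-dimensional polynomial sequence 0 → ℝ → S_K →^curl BDM₁(K) →^div P₀(K) → 0 is exact, where S_K = P₂ + span{x²y, xy²} is the serendipity space. -/
/-- The 2D `BDM₁` space `P₁² + span{curl(x²y), curl(xy²)}`. -/
def BDM1 : Set ((ℝ × ℝ) → ℝ × ℝ) :=
  {q | ∃ a0 a1 a2 b0 b1 b2 r s : ℝ, ∀ p : ℝ × ℝ,
    q p = (a0 + a1 * p.1 + a2 * p.2 + r * p.1 ^ 2 + s * (2 * p.1 * p.2),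
           b0 + b1 * p.1 + b2 * p.2 - r * (2 * p.1 * p.2) - s * p.2 ^ 2)}

/-- The serendipity space `S_K = P₂ + span{x²y, xy²}`. -/
def SK : Set ((ℝ × ℝ) → ℝ) :=
  {s | ∃ a b c d e f α β : ℝ, ∀ p : ℝ × ℝ,
    s p = a + b * p.1 + c * p.2 + d * p.1 ^ 2 + e * p.1 * p.2 + f * p.2 ^ 2
      + α * p.1 ^ 2 * p.2 + β * p.1 * p.2 ^ 2}

/-- `curl u = (∂₂u, −∂₁u)` for a scalar function `u` -/
noncomputable def curl2 (s : (ℝ × ℝ) → ℝ) : (ℝ × ℝ) → ℝ × ℝ :=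
  fun p => (deriv (fun t => s (p.1, t)) p.2, -deriv (fun t => s (t, p.2)) p.1)

/-- the divergence `∂₁q₁ + ∂₂q₂` -/
noncomputable def dv (q : (ℝ × ℝ) → ℝ × ℝ) : (ℝ × ℝ) → ℝ :=
  fun p => deriv (fun t => (q (t, p.2)).1) p.1 + deriv (fun t => (q (p.1, t)).2) p.2

/-!
Every function involved is at most quadratic in each variable separately, so all partial
derivatives reduce to `d/dt (A + B t + C t²) = B + 2 C t`, and `curl` and `div` become explicit
linear maps on the coefficient vectors. Exactness is then linear algebra on coefficients: a
divergence-free `BDM₁` field `(a₀ + a₁x + a₂y + …, b₀ + b₁x - a₁y - …)` is the curl of the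
serendipity function `-b₀x + a₀y - (b₁/2)x² + a₁xy + (a₂/2)y² + r x²y + s xy²`.
-/

lemma deriv_quadratic (A B C x : ℝ) :
    deriv (fun t : ℝ => A + B * t + C * t ^ 2) x = B + C * (2 * x) := by
  have hsq : HasDerivAt (fun t : ℝ => t ^ 2) (2 * x) x := by
    simpa using hasDerivAt_pow 2 x
  exact ((((hasDerivAt_id' x).const_mul B).const_add A).add (hsq.const_mul C)).deriv.trans
    (by ring)

section Serendipity

variable {s : (ℝ × ℝ) → ℝ} {a b c d e f α β : ℝ}

lemma curl2_eq_of_coeffs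
    (hs : ∀ p : ℝ × ℝ,
      s p = a + b * p.1 + c * p.2 + d * p.1 ^ 2 + e * p.1 * p.2 + f * p.2 ^ 2
        + α * p.1 ^ 2 * p.2 + β * p.1 * p.2 ^ 2) :
    curl2 s = fun p =>
      (c + e * p.1 + 2 * f * p.2 + α * p.1 ^ 2 + β * (2 * p.1 * p.2),
       -b + -(2 * d) * p.1 + -e * p.2 - α * (2 * p.1 * p.2) - β * p.2 ^ 2) := by
  funext p
  have hy : (fun t => s (p.1, t)) = fun t : ℝ =>
      (a + b * p.1 + d * p.1 ^ 2) + (c + e * p.1 + α * p.1 ^ 2) * t + (f + β * p.1) * t ^ 2 := by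
    funext t; rw [hs]; ring
  have hx : (fun t => s (t, p.2)) = fun t : ℝ =>
      (a + c * p.2 + f * p.2 ^ 2) + (b + e * p.2 + β * p.2 ^ 2) * t + (d + α * p.2) * t ^ 2 := by
    funext t; rw [hs]; ring
  simp only [curl2, hy, hx, deriv_quadratic]
  exact Prod.ext (by ring) (by ring)

lemma curl2_mem_BDM1 (hs : s ∈ SK) : curl2 s ∈ BDM1 := by
  obtain ⟨a, b, c, d, e, f, α, β, hs⟩ := hs
  exact ⟨_, _, _, _, _, _, _, _, congrFun (curl2_eq_of_coeffs hs)⟩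

lemma eq_const_of_curl2_eq_zero (hs : s ∈ SK) (hcurl : curl2 s = fun _ => (0, 0)) :
    ∃ k : ℝ, s = fun _ => k := by
  obtain ⟨a, b, c, d, e, f, α, β, hs⟩ := hs
  have hzero : ∀ x y : ℝ,
      c + e * x + 2 * f * y + α * x ^ 2 + β * (2 * x * y) = 0 ∧
      -b + -(2 * d) * x + -e * y - α * (2 * x * y) - β * y ^ 2 = 0 := fun x y => by
    simpa [Prod.ext_iff] using congrFun ((curl2_eq_of_coeffs hs).symm.trans hcurl) (x, y)
  have h00 := hzero 0 0
  have h10 := hzero 1 0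
  have hm10 := hzero (-1) 0
  have h01 := hzero 0 1
  have h11 := hzero 1 1
  norm_num at h00 h10 hm10 h01 h11
  have hb : b = 0 := by linarith
  have hc : c = 0 := by linarith
  have hd : d = 0 := by linarith
  have he : e = 0 := by linarith
  have hf : f = 0 := by linarith
  have hα : α = 0 := by linarith
  have hβ : β = 0 := by linarith
  exact ⟨a, funext fun p => by simp [hs, hb, hc, hd, he, hf, hα, hβ]⟩

end Serendipity

lemma curl2_const (k : ℝ) : curl2 (fun _ => k) = fun _ => (0, 0) := by
  funext p
  simp [curl2]

section BDM

variable {q : (ℝ × ℝ) → ℝ × ℝ} {a0 a1 a2 b0 b1 b2 r s : ℝ}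

lemma dv_eq_of_coeffs
    (hq : ∀ p : ℝ × ℝ,
      q p = (a0 + a1 * p.1 + a2 * p.2 + r * p.1 ^ 2 + s * (2 * p.1 * p.2),
             b0 + b1 * p.1 + b2 * p.2 - r * (2 * p.1 * p.2) - s * p.2 ^ 2)) :
    dv q = fun _ => a1 + b2 := by
  funext p
  have hx : (fun t => (q (t, p.2)).1) = fun t : ℝ =>
      (a0 + a2 * p.2) + (a1 + s * (2 * p.2)) * t + r * t ^ 2 := by
    funext t; rw [hq]; ring
  have hy : (fun t => (q (p.1, t)).2) = fun t : ℝ =>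
      (b0 + b1 * p.1) + (b2 - r * (2 * p.1)) * t + (-s) * t ^ 2 := by
    funext t; rw [hq]; ring
  simp only [dv, hx, hy, deriv_quadratic]
  ring

lemma dv_const_of_mem_BDM1 (hq : q ∈ BDM1) : ∃ k : ℝ, dv q = fun _ => k := by
  obtain ⟨a0, a1, a2, b0, b1, b2, r, s, hq⟩ := hq
  exact ⟨a1 + b2, dv_eq_of_coeffs hq⟩

lemma exists_curl2_eq_of_dv_eq_zero (hq : q ∈ BDM1) (hdiv : dv q = fun _ => 0) :
    ∃ u ∈ SK, q = curl2 u := by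
  obtain ⟨a0, a1, a2, b0, b1, b2, r, s, hq⟩ := hq
  have htrace : a1 + b2 = 0 := congrFun ((dv_eq_of_coeffs hq).symm.trans hdiv) 0
  have hu : ∀ p : ℝ × ℝ, (fun p : ℝ × ℝ => -b0 * p.1 + a0 * p.2 + -(b1 / 2) * p.1 ^ 2
      + a1 * p.1 * p.2 + a2 / 2 * p.2 ^ 2 + r * p.1 ^ 2 * p.2 + s * p.1 * p.2 ^ 2) p =
      0 + -b0 * p.1 + a0 * p.2 + -(b1 / 2) * p.1 ^ 2 + a1 * p.1 * p.2 + a2 / 2 * p.2 ^ 2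
        + r * p.1 ^ 2 * p.2 + s * p.1 * p.2 ^ 2 := fun p => by ring
  refine ⟨_, ⟨_, _, _, _, _, _, _, _, hu⟩, funext fun p => ?_⟩
  rw [hq, curl2_eq_of_coeffs hu]
  exact Prod.ext (by ring) (by linear_combination p.2 * htrace)

end BDM

lemma dv_curl2_of_mem_SK {u : (ℝ × ℝ) → ℝ} (hu : u ∈ SK) : dv (curl2 u) = fun _ => 0 := by
  obtain ⟨a, b, c, d, e, f, α, β, hu⟩ := hu
  rw [dv_eq_of_coeffs (congrFun (curl2_eq_of_coeffs hu)), add_neg_cancel]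

lemma exists_mem_BDM1_dv_eq (k : ℝ) : ∃ q ∈ BDM1, dv q = fun _ => k := by
  have hq : ∀ p : ℝ × ℝ, (fun p : ℝ × ℝ => (k * p.1, (0 : ℝ))) p =
      (0 + k * p.1 + 0 * p.2 + 0 * p.1 ^ 2 + 0 * (2 * p.1 * p.2),
       0 + 0 * p.1 + 0 * p.2 - 0 * (2 * p.1 * p.2) - 0 * p.2 ^ 2) :=
    fun p => Prod.ext (by ring) (by ring)
  exact ⟨_, ⟨_, _, _, _, _, _, _, _, hq⟩, by simpa using dv_eq_of_coeffs hq⟩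

/-- Exactness of `0 → ℝ → S_K → BDM₁ → P₀ → 0`: the kernel of `curl` on `S_K`
is the constants, the image of `curl` is the kernel of `div` in `BDM₁`, and
`div` maps `BDM₁` onto the constants. -/
theorem stmt_5 :
    ({s ∈ SK | curl2 s = fun _ => (0, 0)} = {s | ∃ c : ℝ, s = fun _ => c}) ∧
    ({q | ∃ s ∈ SK, q = curl2 s} = {q ∈ BDM1 | dv q = fun _ => 0}) ∧
    ({g : (ℝ × ℝ) → ℝ | ∃ q ∈ BDM1, g = dv q} = {g | ∃ c : ℝ, g = fun _ => c}) := by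
  refine ⟨Set.ext fun s => ⟨?_, ?_⟩, Set.ext fun q => ⟨?_, ?_⟩, Set.ext fun g => ⟨?_, ?_⟩⟩
  · rintro ⟨hs, hcurl⟩
    exact eq_const_of_curl2_eq_zero hs hcurl
  · rintro ⟨k, rfl⟩
    exact ⟨⟨k, 0, 0, 0, 0, 0, 0, 0, fun _ => by ring⟩, curl2_const k⟩
  · rintro ⟨u, hu, rfl⟩
    exact ⟨curl2_mem_BDM1 hu, dv_curl2_of_mem_SK hu⟩
  · rintro ⟨hq, hdiv⟩
    exact exists_curl2_eq_of_dv_eq_zero hq hdiv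
  · rintro ⟨q, hq, rfl⟩
    exact dv_const_of_mem_BDM1 hq
  · rintro ⟨k, rfl⟩
    obtain ⟨q, hq, hdiv⟩ := exists_mem_BDM1_dv_eq k
    exact ⟨q, hq, hdiv.symm⟩
end

section
/- A divergence-free element of BDM₁(K) is the curl of an element of the serendipity space S_K. -/
lemma quad_deriv (A B C x : ℝ) :
    deriv (fun t => A + B * t + C * t ^ 2) x = B + 2 * C * x := by
  have h : HasDerivAt (fun t => A + B * t + C * t ^ 2) (B + 2 * C * x) x := by
    have h1 : HasDerivAt (fun t : ℝ => A) 0 x := hasDerivAt_const x A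
    have h2 : HasDerivAt (fun t : ℝ => B * t) B x := by
      simpa using (hasDerivAt_id x).const_mul B
    have h3 : HasDerivAt (fun t : ℝ => C * t ^ 2) (C * (2 * x)) x := by
      simpa using (hasDerivAt_pow 2 x).const_mul C
    have := (h1.add h2).add h3
    rw [show B + 2 * C * x = 0 + B + C * (2 * x) by ring]
    exact this
  exact h.deriv

/-- Every divergence-free element of `BDM₁` is the curl of an element of the
serendipity space `S_K`. -/
theorem stmt_6 : ∀ q ∈ BDM1, dv q = (fun _ => 0) → ∃ s ∈ SK, q = curl2 s := by
  rintro q ⟨a0, a1, a2, b0, b1, b2, r, s, hq⟩ hdv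
  -- divergence-free gives a1 + b2 = 0
  have e1 : (fun t => (q (t, (0:ℝ))).1) = fun t => a0 + a1 * t + r * t ^ 2 := by
    funext t; rw [hq (t, 0)]; dsimp only; ring
  have e2 : (fun t => (q ((0:ℝ), t)).2) = fun t => b0 + b2 * t + (-s) * t ^ 2 := by
    funext t; rw [hq (0, t)]; dsimp only; ring
  have hdiv : a1 + b2 = 0 := by
    have h0 := congrFun hdv (0, 0)
    simp only [dv] at h0
    rw [e1, e2, quad_deriv, quad_deriv] at h0
    linarith
  refine ⟨fun p => -b0 * p.1 + a0 * p.2 + (-(b1/2)) * p.1 ^ 2 + a1 * p.1 * p.2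
      + (a2/2) * p.2 ^ 2 + r * p.1 ^ 2 * p.2 + s * p.1 * p.2 ^ 2, ?_, ?_⟩
  · exact ⟨0, -b0, a0, -(b1/2), a1, a2/2, r, s, fun p => by ring⟩
  · funext p
    simp only [curl2]
    have f1 : (fun t => -b0 * p.1 + a0 * t + (-(b1/2)) * p.1 ^ 2 + a1 * p.1 * t
        + (a2/2) * t ^ 2 + r * p.1 ^ 2 * t + s * p.1 * t ^ 2)
        = fun t => (-b0 * p.1 + (-(b1/2)) * p.1 ^ 2)
          + (a0 + a1 * p.1 + r * p.1 ^ 2) * t + (a2/2 + s * p.1) * t ^ 2 := by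
      funext t; ring
    have f2 : (fun t => -b0 * t + a0 * p.2 + (-(b1/2)) * t ^ 2 + a1 * t * p.2
        + (a2/2) * p.2 ^ 2 + r * t ^ 2 * p.2 + s * t * p.2 ^ 2)
        = fun t => (a0 * p.2 + (a2/2) * p.2 ^ 2)
          + (-b0 + a1 * p.2 + s * p.2 ^ 2) * t + (-(b1/2) + r * p.2) * t ^ 2 := by
      funext t; ring
    rw [hq p, f1, f2, quad_deriv, quad_deriv]
    have hb2 : b2 = -a1 := by linarith
    rw [hb2]
    exact Prod.ext (by ring) (by ring)
end

section
/- The degrees of freedom for BDM₁ on an edge are unisolvent: a vector field q ∈ BDM₁(K) on the unit square is uniquely determined by the moments ∫_e (q·n)·p₁ ds over each of the four edges e and for all p₁ ∈ P₁(e). -/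
lemma integral_affine_mul_affine (a b u v : ℝ) :
    ∫ t in (0:ℝ)..1, (a + b * t) * (u + v * t) = a * u + (a * v + b * u) / 2 + b * v / 3 := by
  have hderiv : ∀ t ∈ Set.uIcc (0:ℝ) 1, HasDerivAt
      (fun t => a * u * t + (a * v + b * u) * t ^ 2 / 2 + b * v * t ^ 3 / 3)
      ((a + b * t) * (u + v * t)) t := by
    intro t _
    refine ((((hasDerivAt_id' t).const_mul (a * u)).add
      (((hasDerivAt_pow 2 t).const_mul (a * v + b * u)).div_const 2)).add
      (((hasDerivAt_pow 3 t).const_mul (b * v)).div_const 3)).congr_deriv ?_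
    norm_num
    ring
  rw [intervalIntegral.integral_eq_sub_of_hasDerivAt hderiv
    ((by fun_prop : Continuous _).intervalIntegrable 0 1)]
  ring

lemma affine_eq_zero_of_moments (g : ℝ → ℝ) (u v : ℝ) (hg : ∀ t, g t = u + v * t)
    (hmom : ∀ a b : ℝ, ∫ t in (0:ℝ)..1, (a + b * t) * g t = 0) : u = 0 ∧ v = 0 := by
  simp only [hg, integral_affine_mul_affine] at hmom
  have h₁ := hmom 1 0
  have h₂ := hmom 0 1
  constructor <;> linarith

/-- Unisolvency of the `BDM₁` degrees of freedom on the unit square `K = [0,1]²`: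
if `q ∈ BDM₁(K)` has vanishing moments `∫_e (q·n) p₁ ds` of its normal component
against all `p₁ ∈ P₁(e)` on each of the four edges, then `q = 0`.
(Bottom edge: `n = (0,−1)`; right: `n = (1,0)`; top: `n = (0,1)`; left: `n = (−1,0)`.) -/
theorem stmt_7 (q : (ℝ × ℝ) → ℝ × ℝ) (hq : q ∈ BDM1)
    (hbot : ∀ a b : ℝ, (∫ t in (0:ℝ)..1, (a + b * t) * (-(q (t, 0)).2)) = 0)
    (hright : ∀ a b : ℝ, (∫ t in (0:ℝ)..1, (a + b * t) * (q (1, t)).1) = 0)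
    (htop : ∀ a b : ℝ, (∫ t in (0:ℝ)..1, (a + b * t) * (q (t, 1)).2) = 0)
    (hleft : ∀ a b : ℝ, (∫ t in (0:ℝ)..1, (a + b * t) * (-(q (0, t)).1)) = 0) :
    q = fun _ => (0, 0) := by
  obtain ⟨a0, a1, a2, b0, b1, b2, r, s, hq⟩ := hq
  obtain ⟨hbot₀, hbot₁⟩ := affine_eq_zero_of_moments _ (-b0) (-b1)
    (fun t => by simp only [hq]; ring) hbot
  obtain ⟨hright₀, hright₁⟩ := affine_eq_zero_of_moments _ (a0 + a1 + r) (a2 + 2 * s)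
    (fun t => by simp only [hq]; ring) hright
  obtain ⟨htop₀, htop₁⟩ := affine_eq_zero_of_moments _ (b0 + b2 - s) (b1 - 2 * r)
    (fun t => by simp only [hq]; ring) htop
  obtain ⟨hleft₀, hleft₁⟩ := affine_eq_zero_of_moments _ (-a0) (-a2)
    (fun t => by simp only [hq]; ring) hleft
  obtain ⟨rfl, rfl, rfl, rfl, rfl, rfl, rfl, rfl⟩ :
      a0 = 0 ∧ a1 = 0 ∧ a2 = 0 ∧ b0 = 0 ∧ b1 = 0 ∧ b2 = 0 ∧ r = 0 ∧ s = 0 := by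
    refine ⟨?_, ?_, ?_, ?_, ?_, ?_, ?_, ?_⟩ <;> linarith
  funext p
  simp [hq]
end
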